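/- Let k be an algebraically closed field of characteristic ≠ 2. In the setting of the previous bracket on V ⊕ W of rank (1|1)-type weight spaces with n = λ₁ − λ₂ > 1: define on V = V(λ) = Sym_n(std)* ⊗ det^{λ₁} and W = V(λ*) the bracket [ , ] = [ , ]₁ + [ , ]₂ with [ , ]₁ into k·I₂ given by d_i = (−1)^i binom(n,i) d and [ , ]₂ into 𝔰𝔩₂ given by the unique (up to scalar a) SL₂-equivariant pairing, with [V,V] = [W,W] = 0. If a ≠ 0, then there exists v ∈ V ⊕ W with [[v, v], v] ≠ 0. Concretely, for v = s₀* ⊗ det^{λ₁} + t_{n−1}* ⊗ det^{−λ₂} one has [v, v] = 2aE_{1,−1} and [[v, v], v] = −4a·t_{n−2}* ⊗ det^{−λ₂} ≠ 0. -/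

import Mathlib

/-!
Among the pairs (s_i*, t_j*) only (s₀*, t_{n−1}*) occurs in v, and since 0 + (n − 1) = n − 1 its
bracket is the E_{1,−1}-component b₀ = a of the pairing; hence [v, v] = 2a E_{1,−1}. This raising
operator kills the highest weight vector s₀* and maps t_{n−1}* to −2 t_{n−2}*, so
[[v, v], v] = −4a t_{n−2}*, which is nonzero because 2 and a are units.
-/

open Matrix
open scoped BigOperators

/-- E_{1,-1}. -/
def Epl (k : Type) [Field k] : Matrix (Fin 2) (Fin 2) k := !![0, 1; 0, 0]
/-- E_{-1,1}. -/
def Emn (k : Type) [Field k] : Matrix (Fin 2) (Fin 2) k := !![0, 0; 1, 0]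
/-- H. -/
def Hm (k : Type) [Field k] : Matrix (Fin 2) (Fin 2) k := !![1, 0; 0, -1]

/-- Action of E_{1,-1} on Sym_n(V)* in the dual weight basis s₀*, …, s_n*:
E_{1,-1} s_i* = −(n−i+1) s_{i−1}*. -/
def actE {k : Type} [Field k] {n : ℕ} (f : Fin (n + 1) → k) : Fin (n + 1) → k :=
  fun i => if h : (i : ℕ) + 1 < n + 1 then (-((n : k) - ((i : ℕ) : k))) * f ⟨(i : ℕ) + 1, h⟩ else 0

/-- Action of E_{-1,1} on Sym_n(V)*: E_{-1,1} s_i* = −(i+1) s_{i+1}*. -/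
def actF {k : Type} [Field k] {n : ℕ} (f : Fin (n + 1) → k) : Fin (n + 1) → k :=
  fun i => if (i : ℕ) = 0 then 0
    else (-((i : ℕ) : k)) * f ⟨(i : ℕ) - 1, Nat.lt_of_le_of_lt (Nat.sub_le _ _) i.isLt⟩

/-- Action of H on Sym_n(V)*: H s_i* = (n − 2i) s_i*. -/
def actH {k : Type} [Field k] {n : ℕ} (f : Fin (n + 1) → k) : Fin (n + 1) → k :=
  fun i => ((n : k) - 2 * ((i : ℕ) : k)) * f i

/-- The 𝔤𝔩₂-action on V(λ) = Sym_n(V)* ⊗ det^{λ₁}: a matrix m = m₀₁E₊ + m₁₀E₋ + τ'H + τI₂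
acts by the standard 𝔰𝔩₂-formulas, the identity I₂ acting by the central weight κ. -/
def glActV {k : Type} [Field k] {n : ℕ} (κ : k) (m : Matrix (Fin 2) (Fin 2) k)
    (f : Fin (n + 1) → k) : Fin (n + 1) → k :=
  m 0 1 • actE f + m 1 0 • actF f + ((m 0 0 - m 1 1) / 2) • actH f
    + (((m 0 0 + m 1 1) / 2) * κ) • f

/-- The 𝔤𝔩₂-action on V(λ) ⊕ V(λ*); the central weight on the second summand is −κ. -/
def glActVW {k : Type} [Field k] {n : ℕ} (κ : k) (m : Matrix (Fin 2) (Fin 2) k)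
    (v : (Fin (n + 1) → k) × (Fin (n + 1) → k)) :
    (Fin (n + 1) → k) × (Fin (n + 1) → k) :=
  (glActV κ m v.1, glActV (-κ) m v.2)

/-- Value of the bracket [s_i* ⊗ det^{λ₁}, t_j* ⊗ det^{−λ₂}] ∈ 𝔤𝔩₂: the 𝔷-part given by
d_i = (−1)^i·C(n,i)·d on i + j = n, and the 𝔰𝔩₂-part given by the formulas (∘∘):
a_i = (−1)^i/2·(C(n−1,i) − C(n−1,i−1))·a on i + j = n, b_i = (−1)^i·C(n−1,i)·a on
i + j = n − 1, c_i = (−1)^i·C(n−1,i−1)·a on i + j = n + 1. -/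
def pairCoeff (k : Type) [Field k] (a d : k) (n : ℕ) (i j : ℕ) :
    Matrix (Fin 2) (Fin 2) k :=
  (if i + j = n then
      ((-1 : k) ^ i / 2 *
        ((Nat.choose (n - 1) i : k) -
          (if i = 0 then 0 else (Nat.choose (n - 1) (i - 1) : k))) * a) • Hm k
      + ((-1 : k) ^ i * (Nat.choose n i : k) * d) • (1 : Matrix (Fin 2) (Fin 2) k)
    else 0)
  + (if i + j + 1 = n then ((-1 : k) ^ i * (Nat.choose (n - 1) i : k) * a) • Epl k else 0)
  + (if i + j = n + 1 then
      ((-1 : k) ^ i * (if i = 0 then 0 else (Nat.choose (n - 1) (i - 1) : k)) * a) • Emn k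
    else 0)

/-- The symmetric bilinear extension of the bracket V(λ) × V(λ*) → 𝔤𝔩₂,
with [V(λ), V(λ)] = [V(λ*), V(λ*)] = 0. -/
def pairBr {k : Type} [Field k] (a d : k) (n : ℕ)
    (v w : (Fin (n + 1) → k) × (Fin (n + 1) → k)) : Matrix (Fin 2) (Fin 2) k :=
  ∑ i : Fin (n + 1), ∑ j : Fin (n + 1),
    (v.1 i * w.2 j + w.1 i * v.2 j) • pairCoeff k a d n (i : ℕ) (j : ℕ)

section Bracket

variable {k : Type} [Field k] (a d : k) {n : ℕ}

theorem pairBr_single_single_self (i j : Fin (n + 1)) (x y : k) :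
    pairBr a d n (Pi.single i x, Pi.single j y) (Pi.single i x, Pi.single j y) =
      (2 * x * y) • pairCoeff k a d n i j := by
  rw [pairBr, Fintype.sum_eq_single i, Fintype.sum_eq_single j]
  · simp only [Pi.single_eq_same]
    ring_nf
  · intro j' hj'
    simp [hj']
  · intro i' hi'
    simp [hi']

theorem pairCoeff_zero_sub_one (hn : 0 < n) : pairCoeff k a d n 0 (n - 1) = a • Epl k := by
  rw [pairCoeff, if_neg (by omega), if_pos (by omega), if_neg (by omega)]
  simp

end Bracket

section Action

variable {k : Type} [Field k] {n : ℕ}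

theorem actE_single_zero (x : k) : actE (Pi.single (0 : Fin (n + 1)) x) = 0 := by
  funext i
  rw [actE]
  split
  · exact mul_eq_zero_of_right _ (Pi.single_eq_of_ne (Fin.ne_of_val_ne (Nat.succ_ne_zero _)) _)
  · rfl

theorem actE_single_succ (i : Fin n) (x : k) :
    actE (Pi.single i.succ x) = (-((n : k) - i)) • Pi.single i.castSucc x := by
  funext j
  by_cases hj : j = i.castSucc
  · subst hj
    have hsucc : (⟨i.castSucc + 1, by simp⟩ : Fin (n + 1)) = i.succ := rfl
    rw [actE, dif_pos (by simp), hsucc]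
    simp only [Pi.single_eq_same, Pi.smul_apply, Fin.val_castSucc, smul_eq_mul]
  · rw [Pi.smul_apply, Pi.single_eq_of_ne hj, smul_zero, actE]
    split
    · have hne : (⟨j + 1, by omega⟩ : Fin (n + 1)) ≠ i.succ :=
        fun h => hj (Fin.ext (by simpa [Fin.ext_iff] using h))
      exact mul_eq_zero_of_right _ (Pi.single_eq_of_ne hne _)
    · rfl

theorem glActVW_smul_Epl (κ c : k) (v : (Fin (n + 1) → k) × (Fin (n + 1) → k)) :
    glActVW κ (c • Epl k) v = (c • actE v.1, c • actE v.2) := by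
  simp only [glActVW, glActV, Epl, smul_of, smul_cons, smul_eq_mul, mul_one, mul_zero, of_apply,
    cons_val', cons_val_zero, cons_val_one]
  simp

theorem glActVW_smul_Epl_single_zero_single_succ (κ c x y : k) (i : Fin n) :
    glActVW κ (c • Epl k) (Pi.single 0 x, Pi.single i.succ y) =
      (0, (c * -((n : k) - i)) • Pi.single i.castSucc y) := by
  rw [glActVW_smul_Epl, actE_single_zero, actE_single_succ, smul_zero, smul_smul]

end Action

/-- for n = λ₁ − λ₂ > 1 and a ≠ 0, the cubic identity fails: concretely, for
v = s₀* ⊗ det^{λ₁} + t_{n−1}* ⊗ det^{−λ₂} one has [v, v] = 2aE_{1,−1} and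
[[v, v], v] = −4a · t_{n−2}* ⊗ det^{−λ₂} ≠ 0; in particular some v has [[v, v], v] ≠ 0. -/
theorem stmt13 {k : Type} [Field k] (hchar : ringChar k ≠ 2)
    (n : ℕ) (hn : 1 < n) (a d κ : k) (ha : a ≠ 0) :
    pairBr a d n
        (Pi.single (⟨0, by omega⟩ : Fin (n + 1)) 1,
          Pi.single (⟨n - 1, by omega⟩ : Fin (n + 1)) 1)
        (Pi.single (⟨0, by omega⟩ : Fin (n + 1)) 1,
          Pi.single (⟨n - 1, by omega⟩ : Fin (n + 1)) 1) = (2 * a) • Epl k ∧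
    glActVW κ
        (pairBr a d n
          (Pi.single (⟨0, by omega⟩ : Fin (n + 1)) 1,
            Pi.single (⟨n - 1, by omega⟩ : Fin (n + 1)) 1)
          (Pi.single (⟨0, by omega⟩ : Fin (n + 1)) 1,
            Pi.single (⟨n - 1, by omega⟩ : Fin (n + 1)) 1))
        (Pi.single (⟨0, by omega⟩ : Fin (n + 1)) 1,
          Pi.single (⟨n - 1, by omega⟩ : Fin (n + 1)) 1) =
      (0, (-(4 * a)) • (Pi.single (⟨n - 2, by omega⟩ : Fin (n + 1)) (1 : k) : Fin (n + 1) → k)) ∧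
    ∃ v : (Fin (n + 1) → k) × (Fin (n + 1) → k),
      glActVW κ (pairBr a d n v v) v ≠ 0 := by
  set v : (Fin (n + 1) → k) × (Fin (n + 1) → k) :=
    (Pi.single ⟨0, by omega⟩ 1, Pi.single ⟨n - 1, by omega⟩ 1) with hv
  have hbr : pairBr a d n v v = (2 * a) • Epl k := by
    rw [hv, pairBr_single_single_self, pairCoeff_zero_sub_one a d (by omega), smul_smul, mul_one,
      mul_one]
  have hcube : glActVW κ ((2 * a) • Epl k) v =
      (0, (-(4 * a)) • Pi.single (⟨n - 2, by omega⟩ : Fin (n + 1)) 1) := by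
    have hzero : (⟨0, by omega⟩ : Fin (n + 1)) = 0 := rfl
    have hpred : (⟨n - 1, by omega⟩ : Fin (n + 1)) = (⟨n - 2, by omega⟩ : Fin n).succ :=
      Fin.ext (by simp only [Fin.val_succ]; omega)
    rw [hv, hzero, hpred, glActVW_smul_Epl_single_zero_single_succ]
    congr 2
    rw [Nat.cast_sub (by omega)]
    ring
  have h4a : -(4 * a) ≠ 0 := by
    have h2 : (2 : k) ≠ 0 := Ring.two_ne_zero hchar
    rw [show (4 : k) = 2 * 2 by norm_num]
    exact neg_ne_zero.mpr (mul_ne_zero (mul_ne_zero h2 h2) ha)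
  refine ⟨hbr, hbr ▸ hcube, v, ?_⟩
  rw [hbr, hcube, Ne, Prod.mk_eq_zero, smul_eq_zero, Pi.single_eq_zero_iff]
  simp [h4a]
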